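/- Let N ≥ 3 and let u₀, u₁ : ℝ^N → ℂ be integrable with ∫_{ℝ^N} |ŵ₀(ξ)|² dξ < ∞ and ∫_{ℝ^N} |ŵ₁(ξ)|² dξ < ∞. Let û(ξ,t) be the explicit Fourier-space solution with data ŵ₀(ξ), ŵ₁(ξ). Then there exist C > 0 depending only on N and T > 0 such that for all t ≥ T: ∫_{ℝ^N} |û(ξ,t)|² dξ ≤ C ( ∫_{ℝ^N}|ŵ₀(ξ)|² dξ + ∫_{ℝ^N}|ŵ₁(ξ)|² dξ + ‖u₀‖_{L¹}² + ‖u₁‖_{L¹}² ) t^{-N/2}. -/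

import Mathlib

open MeasureTheory

/-- Non-normalized Fourier transform `ŵ(ξ) = ∫ u(x) e^{-i⟨x,ξ⟩} dx`. -/
noncomputable def ft {N : ℕ} (u : EuclideanSpace ℝ (Fin N) → ℂ)
    (ξ : EuclideanSpace ℝ (Fin N)) : ℂ :=
  ∫ x, u x * Complex.exp (-Complex.I * ((inner ℝ x ξ : ℝ) : ℂ))

/-- The explicit Fourier-space solution with data `w₀ ξ`, `w₁ ξ`. -/
noncomputable def uhat {N : ℕ} (w₀ w₁ : EuclideanSpace ℝ (Fin N) → ℂ)
    (ξ : EuclideanSpace ℝ (Fin N)) (t : ℝ) : ℂ :=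
  (Real.exp (-(t * Real.log (1 + ‖ξ‖ ^ 2)) / 2) : ℂ)
    * ((Real.cos (Real.pi * t / 4)
        + (2 * Real.log (1 + ‖ξ‖ ^ 2) / Real.pi) * Real.sin (Real.pi * t / 4) : ℝ) : ℂ)
    * w₀ ξ
  + (Real.exp (-(t * Real.log (1 + ‖ξ‖ ^ 2)) / 2) : ℂ) * ((4 / Real.pi : ℝ) : ℂ)
    * (Real.sin (Real.pi * t / 4) : ℂ) * w₁ ξ

/-!
Pointwise, `|û(ξ,t)|² ≤ 8 (1+|ξ|²)^{-t} (1 + log (1+|ξ|²))² (|ŵ₀(ξ)|² + |ŵ₁(ξ)|²)`. For `|ξ| ≤ 1`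
concavity of `log` gives `log (1+|ξ|²) ≥ log 2 · |ξ|²`, so the multiplier is at most a Gaussian
`4 e^{-t log 2 |ξ|²}`; bounding `|ŵᵢ| ≤ ‖uᵢ‖_{L¹}` there, this part integrates to
`≲ (‖u₀‖²_{L¹} + ‖u₁‖²_{L¹}) t^{-N/2}`. For `|ξ| ≥ 1` the multiplier is at most `4 · 2^{-t}`, which
beats `t^{-N/2}` for large `t`, against `∫ |ŵ₀|² + |ŵ₁|²`.
-/

open Real Filter

lemma log_two_mul_le_log_one_add {s : ℝ} (h0 : 0 ≤ s) (h1 : s ≤ 1) :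
    log 2 * s ≤ log (1 + s) := by
  rw [le_log_iff_exp_le (by linarith)]
  have h := convexOn_exp.2 (Set.mem_univ (log 2)) (Set.mem_univ 0) h0
    (by linarith : 0 ≤ 1 - s) (by ring)
  simp only [smul_eq_mul, mul_zero, add_zero, exp_log two_pos, exp_zero, mul_one] at h
  rw [mul_comm]
  linarith

lemma exp_neg_mul_log_one_add_mul_sq_le {s t : ℝ} (hs : 0 ≤ s) (ht : 2 ≤ t) :
    exp (-(t * log (1 + s))) * (1 + log (1 + s)) ^ 2
      ≤ 4 * exp (-(log 2 * t)) + 4 * exp (-(log 2 * t) * s) := by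
  set a := log (1 + s)
  rcases le_or_gt s 1 with hs1 | hs1
  · have ha0 : 0 ≤ a := log_nonneg (by linarith)
    have ha1 : a ≤ 1 := by
      have : a ≤ log 2 := log_le_log (by linarith) (by linarith)
      linarith [log_le_sub_one_of_pos (show (0 : ℝ) < 2 by norm_num)]
    have hexp : exp (-(t * a)) ≤ exp (-(log 2 * t) * s) := by
      gcongr
      nlinarith [log_two_mul_le_log_one_add hs hs1]
    have hsq : (1 + a) ^ 2 ≤ 4 := by nlinarith
    calc exp (-(t * a)) * (1 + a) ^ 2 ≤ exp (-(log 2 * t) * s) * 4 := by gcongr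
      _ ≤ _ := by linarith [exp_pos (-(log 2 * t))]
  · have ha : log 2 ≤ a := log_le_log two_pos (by linarith)
    have hsq : (1 + a) ^ 2 ≤ exp (2 * a) := by
      rw [two_mul, exp_add, ← sq]
      gcongr
      · linarith [log_nonneg (by linarith : (1 : ℝ) ≤ 2)]
      · linarith [add_one_le_exp a]
    calc exp (-(t * a)) * (1 + a) ^ 2 ≤ exp (-(t * a)) * exp (2 * a) := by gcongr
      _ = exp (-((t - 2) * a)) := by rw [← exp_add]; ring_nf
      _ ≤ exp (-((t - 2) * log 2)) := by gcongr
      _ = 4 * exp (-(log 2 * t)) := by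
        rw [show -((t - 2) * log 2) = -(log 2 * t) + 2 * log 2 by ring, exp_add,
          show 2 * log 2 = log 4 by rw [← log_rpow two_pos]; norm_num, exp_log four_pos]
        ring
      _ ≤ _ := by linarith [exp_pos (-(log 2 * t) * s)]

lemma norm_uhat_le {N : ℕ} (w₀ w₁ : EuclideanSpace ℝ (Fin N) → ℂ)
    (ξ : EuclideanSpace ℝ (Fin N)) (t : ℝ) :
    ‖uhat w₀ w₁ ξ t‖ ≤ 2 * exp (-(t * log (1 + ‖ξ‖ ^ 2)) / 2) * (1 + log (1 + ‖ξ‖ ^ 2))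
      * (‖w₀ ξ‖ + ‖w₁ ξ‖) := by
  set a := log (1 + ‖ξ‖ ^ 2)
  set E := exp (-(t * a) / 2)
  set θ := π * t / 4
  have ha : 0 ≤ a := log_nonneg (by nlinarith [norm_nonneg ξ])
  have hcoef₀ : |cos θ + 2 * a / π * sin θ| ≤ 2 * (1 + a) := by
    have h : 2 * a / π ≤ a := by
      rw [div_le_iff₀ pi_pos]; nlinarith [pi_gt_three]
    calc |cos θ + 2 * a / π * sin θ| ≤ |cos θ| + 2 * a / π * |sin θ| := by
          refine (abs_add_le _ _).trans ?_
          rw [abs_mul, abs_of_nonneg (show 0 ≤ 2 * a / π by positivity)]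
      _ ≤ 1 + a * 1 := by
          gcongr
          · exact abs_cos_le_one θ
          · exact abs_sin_le_one θ
      _ ≤ 2 * (1 + a) := by linarith
  have hcoef₁ : |4 / π| * |sin θ| ≤ 2 * (1 + a) := by
    have h : 4 / π ≤ 2 := by
      rw [div_le_iff₀ pi_pos]; linarith [pi_gt_three]
    rw [abs_of_pos (by positivity)]
    nlinarith [abs_sin_le_one θ, abs_nonneg (sin θ)]
  have hE : 0 < E := exp_pos _
  calc ‖uhat w₀ w₁ ξ t‖
      ≤ E * |cos θ + 2 * a / π * sin θ| * ‖w₀ ξ‖ + E * |4 / π| * |sin θ| * ‖w₁ ξ‖ := by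
        refine (norm_add_le _ _).trans (le_of_eq ?_)
        simp only [norm_mul, Complex.norm_real, Real.norm_eq_abs, abs_of_pos hE, E, a, θ]
    _ ≤ E * (2 * (1 + a)) * ‖w₀ ξ‖ + E * (2 * (1 + a)) * ‖w₁ ξ‖ := by
        rw [mul_assoc E |4 / π|]
        gcongr
    _ = _ := by ring

lemma norm_uhat_sq_le {N : ℕ} (w₀ w₁ : EuclideanSpace ℝ (Fin N) → ℂ)
    (ξ : EuclideanSpace ℝ (Fin N)) (t : ℝ) :
    ‖uhat w₀ w₁ ξ t‖ ^ 2 ≤ 8 * (exp (-(t * log (1 + ‖ξ‖ ^ 2))) * (1 + log (1 + ‖ξ‖ ^ 2)) ^ 2)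
      * (‖w₀ ξ‖ ^ 2 + ‖w₁ ξ‖ ^ 2) := by
  set a := log (1 + ‖ξ‖ ^ 2)
  have hE : exp (-(t * a) / 2) ^ 2 = exp (-(t * a)) := by
    rw [← exp_nat_mul]; ring_nf
  calc ‖uhat w₀ w₁ ξ t‖ ^ 2
      ≤ (2 * exp (-(t * a) / 2) * (1 + a) * (‖w₀ ξ‖ + ‖w₁ ξ‖)) ^ 2 := by
        gcongr; exact norm_uhat_le w₀ w₁ ξ t
    _ = 4 * (exp (-(t * a)) * (1 + a) ^ 2) * (‖w₀ ξ‖ + ‖w₁ ξ‖) ^ 2 := by rw [← hE]; ring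
    _ ≤ 8 * (exp (-(t * a)) * (1 + a) ^ 2) * (‖w₀ ξ‖ ^ 2 + ‖w₁ ξ‖ ^ 2) := by
        have : (‖w₀ ξ‖ + ‖w₁ ξ‖) ^ 2 ≤ 2 * (‖w₀ ξ‖ ^ 2 + ‖w₁ ξ‖ ^ 2) := by
          nlinarith [sq_nonneg (‖w₀ ξ‖ - ‖w₁ ξ‖)]
        nlinarith [show 0 ≤ exp (-(t * a)) * (1 + a) ^ 2 by positivity]

lemma norm_ft_le_integral_norm {N : ℕ} (u : EuclideanSpace ℝ (Fin N) → ℂ)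
    (ξ : EuclideanSpace ℝ (Fin N)) : ‖ft u ξ‖ ≤ ∫ x, ‖u x‖ := by
  refine (norm_integral_le_integral_norm _).trans_eq (integral_congr_ae (.of_forall fun x => ?_))
  simp [Complex.norm_exp]

lemma integral_exp_neg_mul_sq_norm_euclideanSpace {N : ℕ} {b : ℝ} (hb : 0 < b) :
    ∫ ξ : EuclideanSpace ℝ (Fin N), exp (-b * ‖ξ‖ ^ 2) = (π / b) ^ ((N : ℝ) / 2) := by
  rw [GaussianFourier.integral_rexp_neg_mul_sq_norm hb, finrank_euclideanSpace_fin]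

lemma integrable_exp_neg_mul_sq_norm_euclideanSpace {N : ℕ} {b : ℝ} (hb : 0 < b) :
    Integrable fun ξ : EuclideanSpace ℝ (Fin N) => exp (-b * ‖ξ‖ ^ 2) :=
  .of_integral_ne_zero <| by
    rw [integral_exp_neg_mul_sq_norm_euclideanSpace hb]; positivity

lemma norm_uhat_sq_le_of_two_le {N : ℕ} {w₀ w₁ : EuclideanSpace ℝ (Fin N) → ℂ} {M₀ M₁ : ℝ}
    (hM₀ : ∀ ξ, ‖w₀ ξ‖ ≤ M₀) (hM₁ : ∀ ξ, ‖w₁ ξ‖ ≤ M₁) {t : ℝ} (ht : 2 ≤ t)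
    (ξ : EuclideanSpace ℝ (Fin N)) :
    ‖uhat w₀ w₁ ξ t‖ ^ 2 ≤ 32 * exp (-(log 2 * t)) * (‖w₀ ξ‖ ^ 2 + ‖w₁ ξ‖ ^ 2)
      + 32 * (M₀ ^ 2 + M₁ ^ 2) * exp (-(log 2 * t) * ‖ξ‖ ^ 2) := by
  have hW : ‖w₀ ξ‖ ^ 2 + ‖w₁ ξ‖ ^ 2 ≤ M₀ ^ 2 + M₁ ^ 2 := by
    gcongr
    exacts [hM₀ ξ, hM₁ ξ]
  have hmult := exp_neg_mul_log_one_add_mul_sq_le (sq_nonneg ‖ξ‖) ht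
  calc ‖uhat w₀ w₁ ξ t‖ ^ 2
      ≤ 8 * (4 * exp (-(log 2 * t)) + 4 * exp (-(log 2 * t) * ‖ξ‖ ^ 2))
        * (‖w₀ ξ‖ ^ 2 + ‖w₁ ξ‖ ^ 2) :=
        (norm_uhat_sq_le w₀ w₁ ξ t).trans (by gcongr)
    _ ≤ _ := by nlinarith [exp_pos (-(log 2 * t) * ‖ξ‖ ^ 2)]

lemma integral_norm_uhat_sq_le {N : ℕ} {w₀ w₁ : EuclideanSpace ℝ (Fin N) → ℂ} {M₀ M₁ : ℝ}
    (hM₀ : ∀ ξ, ‖w₀ ξ‖ ≤ M₀) (hM₁ : ∀ ξ, ‖w₁ ξ‖ ≤ M₁)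
    (hw₀ : Integrable fun ξ => ‖w₀ ξ‖ ^ 2) (hw₁ : Integrable fun ξ => ‖w₁ ξ‖ ^ 2)
    {t : ℝ} (ht : 2 ≤ t) :
    ∫ ξ, ‖uhat w₀ w₁ ξ t‖ ^ 2
      ≤ 32 * exp (-(log 2 * t)) * ((∫ ξ, ‖w₀ ξ‖ ^ 2) + ∫ ξ, ‖w₁ ξ‖ ^ 2)
        + 32 * (M₀ ^ 2 + M₁ ^ 2) * (π / log 2) ^ ((N : ℝ) / 2) * t ^ (-(N : ℝ) / 2) := by
  have hb : 0 < log 2 * t := mul_pos (log_pos one_lt_two) (by linarith)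
  have hgauss := integrable_exp_neg_mul_sq_norm_euclideanSpace (N := N) hb
  calc ∫ ξ, ‖uhat w₀ w₁ ξ t‖ ^ 2
      ≤ ∫ ξ, (32 * exp (-(log 2 * t)) * (‖w₀ ξ‖ ^ 2 + ‖w₁ ξ‖ ^ 2)
          + 32 * (M₀ ^ 2 + M₁ ^ 2) * exp (-(log 2 * t) * ‖ξ‖ ^ 2)) :=
        integral_mono_of_nonneg (.of_forall fun ξ => by positivity)
          (((hw₀.add hw₁).const_mul _).add (hgauss.const_mul _))
          (.of_forall (norm_uhat_sq_le_of_two_le hM₀ hM₁ ht))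
    _ = 32 * exp (-(log 2 * t)) * ((∫ ξ, ‖w₀ ξ‖ ^ 2) + ∫ ξ, ‖w₁ ξ‖ ^ 2)
        + 32 * (M₀ ^ 2 + M₁ ^ 2) * (π / (log 2 * t)) ^ ((N : ℝ) / 2) := by
      rw [integral_add, integral_const_mul, integral_const_mul, integral_add hw₀ hw₁,
        integral_exp_neg_mul_sq_norm_euclideanSpace hb]
      exacts [(hw₀.add hw₁).const_mul _, hgauss.const_mul _]
    _ = _ := by
      rw [← div_div, div_rpow (by positivity) (by linarith), neg_div, rpow_neg (by linarith)]
      ring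

lemma eventually_exp_neg_mul_le_rpow_neg {c : ℝ} (hc : 0 < c) (p : ℝ) :
    ∀ᶠ t in atTop, exp (-(c * t)) ≤ t ^ (-p) := by
  filter_upwards [(tendsto_rpow_mul_exp_neg_mul_atTop_nhds_zero p c hc).eventually_le_const
    one_pos, eventually_gt_atTop 0] with t hle ht
  rw [rpow_neg ht.le, ← one_div, le_div_iff₀ (rpow_pos_of_pos ht p), mul_comm, ← neg_mul]
  exact hle

theorem stmt_11_general (N : ℕ)
    (u₀ u₁ : EuclideanSpace ℝ (Fin N) → ℂ)
    (hw₀ : Integrable (fun ξ : EuclideanSpace ℝ (Fin N) => ‖ft u₀ ξ‖ ^ 2))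
    (hw₁ : Integrable (fun ξ : EuclideanSpace ℝ (Fin N) => ‖ft u₁ ξ‖ ^ 2)) :
    ∃ C > (0 : ℝ), ∃ T > (0 : ℝ), ∀ t : ℝ, T ≤ t →
      (∫ ξ : EuclideanSpace ℝ (Fin N), ‖uhat (ft u₀) (ft u₁) ξ t‖ ^ 2)
      ≤ C * ((∫ ξ : EuclideanSpace ℝ (Fin N), ‖ft u₀ ξ‖ ^ 2)
              + (∫ ξ : EuclideanSpace ℝ (Fin N), ‖ft u₁ ξ‖ ^ 2)
              + (∫ x, ‖u₀ x‖) ^ 2 + (∫ x, ‖u₁ x‖) ^ 2) * t ^ (-(N : ℝ) / 2) := by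
  obtain ⟨T₀, hT₀⟩ := eventually_atTop.1
    (eventually_exp_neg_mul_le_rpow_neg (log_pos one_lt_two) ((N : ℝ) / 2))
  set K := (π / log 2) ^ ((N : ℝ) / 2)
  refine ⟨32 + 32 * K, by positivity, max T₀ 2, lt_max_of_lt_right two_pos, fun t ht => ?_⟩
  have hdecay : exp (-(log 2 * t)) ≤ t ^ (-(N : ℝ) / 2) := by
    rw [neg_div]; exact hT₀ t (le_of_max_le_left ht)
  have hI : 0 ≤ (∫ ξ, ‖ft u₀ ξ‖ ^ 2) + ∫ ξ, ‖ft u₁ ξ‖ ^ 2 := by positivity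
  calc _ ≤ 32 * exp (-(log 2 * t)) * ((∫ ξ, ‖ft u₀ ξ‖ ^ 2) + ∫ ξ, ‖ft u₁ ξ‖ ^ 2)
        + 32 * ((∫ x, ‖u₀ x‖) ^ 2 + (∫ x, ‖u₁ x‖) ^ 2) * K * t ^ (-(N : ℝ) / 2) :=
        integral_norm_uhat_sq_le (norm_ft_le_integral_norm u₀) (norm_ft_le_integral_norm u₁)
          hw₀ hw₁ (le_of_max_le_right ht)
    _ ≤ 32 * t ^ (-(N : ℝ) / 2) * ((∫ ξ, ‖ft u₀ ξ‖ ^ 2) + ∫ ξ, ‖ft u₁ ξ‖ ^ 2)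
        + 32 * ((∫ x, ‖u₀ x‖) ^ 2 + (∫ x, ‖u₁ x‖) ^ 2) * K * t ^ (-(N : ℝ) / 2) := by gcongr
    _ ≤ _ := by
      have : 0 ≤ t ^ (-(N : ℝ) / 2) := rpow_nonneg (by linarith [le_of_max_le_right ht]) _
      nlinarith [mul_nonneg (mul_nonneg (by positivity : (0 : ℝ) ≤ 32 * K) this) hI,
        mul_nonneg this (by positivity : (0 : ℝ) ≤ 32 * ((∫ x, ‖u₀ x‖) ^ 2 + (∫ x, ‖u₁ x‖) ^ 2))]

/-- Proposition 2.8: decay of the `L²`-norm of the solution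
(Fourier-side squared form, via Plancherel). -/
theorem stmt_11 (N : ℕ) (hN : 3 ≤ N)
    (u₀ u₁ : EuclideanSpace ℝ (Fin N) → ℂ)
    (h₀ : Integrable u₀) (h₁ : Integrable u₁)
    (hw₀ : Integrable (fun ξ : EuclideanSpace ℝ (Fin N) => ‖ft u₀ ξ‖ ^ 2))
    (hw₁ : Integrable (fun ξ : EuclideanSpace ℝ (Fin N) => ‖ft u₁ ξ‖ ^ 2)) :
    ∃ C > (0 : ℝ), ∃ T > (0 : ℝ), ∀ t : ℝ, T ≤ t →
      (∫ ξ : EuclideanSpace ℝ (Fin N), ‖uhat (ft u₀) (ft u₁) ξ t‖ ^ 2)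
      ≤ C * ((∫ ξ : EuclideanSpace ℝ (Fin N), ‖ft u₀ ξ‖ ^ 2)
              + (∫ ξ : EuclideanSpace ℝ (Fin N), ‖ft u₁ ξ‖ ^ 2)
              + (∫ x, ‖u₀ x‖) ^ 2 + (∫ x, ‖u₁ x‖) ^ 2) * t ^ (-(N : ℝ) / 2) :=
  stmt_11_general N u₀ u₁ hw₀ hw₁
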